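/- Let V and V' be types and φ : V → V'. Let v : V × V → ℝ be skew-symmetric and finitely supported. Suppose for each ordered pair (x,y) with v(x,y) ≠ 0 there is given a finite path P(x,y) = (r₀, …, r_N) in V' with r₀ = φ(x) and r_N = φ(y), such that P(y,x) is the reversal of P(x,y). Define the pushforward flow φ^♯v : V' × V' → ℝ by φ^♯v = ½ Σ_{(x,y) : v(x,y) ≠ 0} v(x,y) · J_{P(x,y)}. Then φ^♯v is skew-symmetric and for every x' ∈ V': Σ_{y'∈V'} (φ^♯v)(x', y') = Σ_{x ∈ φ⁻¹(x')} Σ_{y∈V} v(x,y); that is, div(φ^♯v) at x' equals the sum of div v over the fiber φ⁻¹(x'). -/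

import Mathlib

open Function

/-- The unit flow along the path `P x y`. -/
noncomputable def pushJP {V V' : Type*} [DecidableEq V'] (N : V → V → ℕ)
    (P : V → V → ℕ → V') (x y : V) (a b : V') : ℝ :=
  ((((Finset.range (N x y)).filter fun k => P x y k = a ∧ P x y (k + 1) = b).card : ℝ) -
    (((Finset.range (N x y)).filter fun k => P x y (k + 1) = a ∧ P x y k = b).card : ℝ))

/-- The pushforward flow. -/
noncomputable def pushK {V V' : Type*} [DecidableEq V'] (v : V → V → ℝ) (N : V → V → ℕ)
    (P : V → V → ℕ → V') (a b : V') : ℝ :=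
  (1 / 2 : ℝ) * ∑ᶠ p : V × V, v p.1 p.2 * pushJP N P p.1 p.2 a b

/-- Telescoping: the total flow out of `a` along a path equals `[Q 0 = a] - [Q n = a]`. -/
lemma path_flow_div {V' : Type*} [DecidableEq V'] (n : ℕ) (Q : ℕ → V') (a : V') :
    ∑ᶠ b : V', ((((Finset.range n).filter fun k => Q k = a ∧ Q (k + 1) = b).card : ℝ) -
      (((Finset.range n).filter fun k => Q (k + 1) = a ∧ Q k = b).card : ℝ))
    = (if Q 0 = a then (1 : ℝ) else 0) - (if Q n = a then (1 : ℝ) else 0) := by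
  classical
  set S : Finset V' := (Finset.range (n + 1)).image Q with hS
  have hmem : ∀ k ≤ n, Q k ∈ S := fun k hk =>
    Finset.mem_image.2 ⟨k, Finset.mem_range.2 (Nat.lt_succ_of_le hk), rfl⟩
  have hsupp : Function.support (fun b : V' =>
      ((((Finset.range n).filter fun k => Q k = a ∧ Q (k + 1) = b).card : ℝ) -
        (((Finset.range n).filter fun k => Q (k + 1) = a ∧ Q k = b).card : ℝ))) ⊆ ↑S := by
    intro b hb
    by_contra hbS
    apply hb
    have h1 : ((Finset.range n).filter fun k => Q k = a ∧ Q (k + 1) = b) = ∅ := by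
      apply Finset.filter_false_of_mem
      intro k hk hc
      exact hbS (hc.2 ▸ hmem (k + 1) (Finset.mem_range.1 hk))
    have h2 : ((Finset.range n).filter fun k => Q (k + 1) = a ∧ Q k = b) = ∅ := by
      apply Finset.filter_false_of_mem
      intro k hk hc
      exact hbS (hc.2 ▸ hmem k (Nat.le_of_lt (Finset.mem_range.1 hk)))
    simp [h1, h2]
  rw [finsum_eq_sum_of_support_subset _ hsupp]
  have key : ∀ b ∈ S,
      ((((Finset.range n).filter fun k => Q k = a ∧ Q (k + 1) = b).card : ℝ) -
        (((Finset.range n).filter fun k => Q (k + 1) = a ∧ Q k = b).card : ℝ))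
      = ∑ k ∈ Finset.range n,
          ((if Q k = a ∧ Q (k + 1) = b then (1 : ℝ) else 0) -
            (if Q (k + 1) = a ∧ Q k = b then (1 : ℝ) else 0)) := by
    intro b _
    rw [Finset.sum_sub_distrib]
    congr 1
    · rw [Finset.card_filter]
      push_cast
      exact Finset.sum_congr rfl fun k _ => by split <;> simp
    · rw [Finset.card_filter]
      push_cast
      exact Finset.sum_congr rfl fun k _ => by split <;> simp
  rw [Finset.sum_congr rfl key, Finset.sum_comm]
  have inner : ∀ k ∈ Finset.range n,
      (∑ b ∈ S, ((if Q k = a ∧ Q (k + 1) = b then (1 : ℝ) else 0) -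
          (if Q (k + 1) = a ∧ Q k = b then (1 : ℝ) else 0)))
      = (if Q k = a then (1 : ℝ) else 0) - (if Q (k + 1) = a then (1 : ℝ) else 0) := by
    intro k hk
    have hk' := Finset.mem_range.1 hk
    rw [Finset.sum_sub_distrib]
    congr 1
    · by_cases h : Q k = a
      · simp only [h, true_and]
        rw [Finset.sum_ite_eq S (Q (k + 1)) (fun _ => (1 : ℝ))]
        simp [hmem (k + 1) hk']
      · simp [h]
    · by_cases h : Q (k + 1) = a
      · simp only [h, true_and]
        rw [Finset.sum_ite_eq S (Q k) (fun _ => (1 : ℝ))]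
        simp [hmem k (Nat.le_of_lt hk')]
      · simp [h]
  rw [Finset.sum_congr rfl inner]
  exact Finset.sum_range_sub' (fun k => if Q k = a then (1 : ℝ) else 0) n

theorem pushforward_flow_divergence_aux (V V' : Type*) [DecidableEq V'] (φ : V → V')
    (v : V → V → ℝ) (hskew : ∀ x y, v x y = -v y x)
    (hfin : {p : V × V | v p.1 p.2 ≠ 0}.Finite)
    (N : V → V → ℕ) (P : V → V → ℕ → V')
    (hP0 : ∀ x y, v x y ≠ 0 → P x y 0 = φ x)
    (hPN : ∀ x y, v x y ≠ 0 → P x y (N x y) = φ y) :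
    (∀ a b, pushK v N P a b = -pushK v N P b a) ∧
      ∀ a : V', ∑ᶠ b, pushK v N P a b = ∑ᶠ x ∈ φ ⁻¹' {a}, ∑ᶠ y, v x y := by
  classical
  set T : Finset (V × V) := hfin.toFinset with hT
  have hmemT : ∀ p : V × V, p ∈ T ↔ v p.1 p.2 ≠ 0 := by
    intro p; simp [hT]
  have hKfin : ∀ a b, pushK v N P a b
      = (1 / 2 : ℝ) * ∑ p ∈ T, v p.1 p.2 * pushJP N P p.1 p.2 a b := by
    intro a b
    rw [pushK]
    congr 1
    apply finsum_eq_sum_of_support_subset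
    intro p hp
    rw [Finset.mem_coe, hmemT]
    intro hv
    apply hp
    simp [hv]
  have hJskew : ∀ x y a b, pushJP N P x y a b = -pushJP N P x y b a := by
    intro x y a b
    rw [pushJP, pushJP]
    have h1 : ((Finset.range (N x y)).filter fun k => P x y k = a ∧ P x y (k + 1) = b) =
        ((Finset.range (N x y)).filter fun k => P x y (k + 1) = b ∧ P x y k = a) := by
      apply Finset.filter_congr; intro k _; exact and_comm
    have h2 : ((Finset.range (N x y)).filter fun k => P x y (k + 1) = a ∧ P x y k = b) =
        ((Finset.range (N x y)).filter fun k => P x y k = b ∧ P x y (k + 1) = a) := by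
      apply Finset.filter_congr; intro k _; exact and_comm
    rw [h1, h2]; ring
  constructor
  · intro a b
    rw [hKfin, hKfin]
    have h : ∀ p ∈ T, v p.1 p.2 * pushJP N P p.1 p.2 a b
        = -(v p.1 p.2 * pushJP N P p.1 p.2 b a) := by
      intro p _; rw [hJskew]; ring
    rw [Finset.sum_congr rfl h, Finset.sum_neg_distrib]
    ring
  · intro a
    have hJPsupp : ∀ x y, (Function.support fun b => pushJP N P x y a b).Finite := by
      intro x y
      apply Set.Finite.subset ((Finset.range (N x y + 1)).image (P x y)).finite_toSet
      intro b hb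
      by_contra hbS
      apply hb
      have h1 : ((Finset.range (N x y)).filter fun k => P x y k = a ∧ P x y (k + 1) = b) = ∅ := by
        apply Finset.filter_false_of_mem
        intro k hk hc
        exact hbS (hc.2 ▸ Finset.mem_coe.2 (Finset.mem_image.2
          ⟨k + 1, Finset.mem_range.2 (Nat.succ_lt_succ (Finset.mem_range.1 hk)), rfl⟩))
      have h2 : ((Finset.range (N x y)).filter fun k => P x y (k + 1) = a ∧ P x y k = b) = ∅ := by
        apply Finset.filter_false_of_mem
        intro k hk hc
        exact hbS (hc.2 ▸ Finset.mem_coe.2 (Finset.mem_image.2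
          ⟨k, Finset.mem_range.2 (Nat.lt_succ_of_lt (Finset.mem_range.1 hk)), rfl⟩))
      show pushJP N P x y a b = 0
      rw [pushJP, h1, h2]
      simp
    have hvJPsupp : ∀ p : V × V,
        (Function.support fun b => v p.1 p.2 * pushJP N P p.1 p.2 a b).Finite := by
      intro p
      apply (hJPsupp p.1 p.2).subset
      intro b hb
      simp only [Function.mem_support] at hb ⊢
      exact fun h => hb (by rw [h, mul_zero])
    have step1 : ∑ᶠ b, pushK v N P a b =
        (1 / 2 : ℝ) * ∑ p ∈ T, ∑ᶠ b, v p.1 p.2 * pushJP N P p.1 p.2 a b := by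
      have e1 : ∑ᶠ b, pushK v N P a b
          = ∑ᶠ b, (1 / 2 : ℝ) * ∑ p ∈ T, v p.1 p.2 * pushJP N P p.1 p.2 a b :=
        finsum_congr fun b => hKfin a b
      have hFsupp : (Function.support fun b =>
          ∑ p ∈ T, v p.1 p.2 * pushJP N P p.1 p.2 a b).Finite := by
        apply Set.Finite.subset (Set.Finite.biUnion T.finite_toSet fun p _ => hvJPsupp p)
        intro b hb
        simp only [Function.mem_support] at hb
        by_contra hc
        apply hb
        apply Finset.sum_eq_zero
        intro p hp
        by_contra hne
        exact hc (Set.mem_biUnion (Finset.mem_coe.2 hp) (Function.mem_support.2 hne))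
      rw [e1, (mul_finsum _ _).symm,
        finsum_sum_comm T (fun (b : V') (p : V × V) => v p.1 p.2 * pushJP N P p.1 p.2 a b)
          (fun p _ => hvJPsupp p)]
    have hdiv : ∀ p ∈ T, ∑ᶠ b, v p.1 p.2 * pushJP N P p.1 p.2 a b
        = v p.1 p.2 *
          ((if φ p.1 = a then (1 : ℝ) else 0) - (if φ p.2 = a then (1 : ℝ) else 0)) := by
      intro p hp
      have hv : v p.1 p.2 ≠ 0 := (hmemT p).1 hp
      rw [← mul_finsum _ _]
      congr 1
      have h := path_flow_div (N p.1 p.2) (P p.1 p.2) a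
      rw [hP0 p.1 p.2 hv, hPN p.1 p.2 hv] at h
      exact h
    rw [step1, Finset.sum_congr rfl hdiv]
    have hsplit : ∑ p ∈ T, v p.1 p.2 *
        ((if φ p.1 = a then (1 : ℝ) else 0) - (if φ p.2 = a then (1 : ℝ) else 0))
        = ∑ p ∈ T, v p.1 p.2 * (if φ p.1 = a then (1 : ℝ) else 0)
          - ∑ p ∈ T, v p.1 p.2 * (if φ p.2 = a then (1 : ℝ) else 0) := by
      rw [← Finset.sum_sub_distrib]
      exact Finset.sum_congr rfl fun p _ => by ring
    have hswap : ∑ p ∈ T, v p.1 p.2 * (if φ p.2 = a then (1 : ℝ) else 0)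
        = -∑ p ∈ T, v p.1 p.2 * (if φ p.1 = a then (1 : ℝ) else 0) := by
      rw [← Finset.sum_neg_distrib]
      refine Finset.sum_nbij' (i := Prod.swap) (j := Prod.swap) ?_ ?_ ?_ ?_ ?_
      · intro p hp
        rw [hmemT] at hp ⊢
        simp only [Prod.fst_swap, Prod.snd_swap]
        rw [hskew]
        simpa using hp
      · intro p hp
        rw [hmemT] at hp ⊢
        simp only [Prod.fst_swap, Prod.snd_swap]
        rw [hskew]
        simpa using hp
      · intro p _; exact Prod.swap_swap p
      · intro p _; exact Prod.swap_swap p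
      · intro p _
        simp only [Prod.fst_swap, Prod.snd_swap]
        rw [hskew p.1 p.2]
        ring
    rw [hsplit, hswap, sub_neg_eq_add, ← two_mul, ← mul_assoc,
      show ((1 : ℝ) / 2 * 2) = 1 by norm_num, one_mul]
    set A : Finset V := T.image Prod.fst with hA
    set B : Finset V := T.image Prod.snd with hB
    have hy : ∀ x : V, (∑ᶠ y, v x y) = ∑ y ∈ B, v x y := by
      intro x
      apply finsum_eq_sum_of_support_subset
      intro y hyv
      exact Finset.mem_coe.2 (Finset.mem_image.2 ⟨(x, y), (hmemT (x, y)).2 hyv, rfl⟩)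
    have hRHS : (∑ᶠ x ∈ φ ⁻¹' {a}, ∑ᶠ y, v x y)
        = ∑ x ∈ A, if φ x = a then ∑ y ∈ B, v x y else 0 := by
      rw [finsum_mem_def]
      rw [finsum_eq_sum_of_support_subset _ (s := A) ?_]
      · refine Finset.sum_congr rfl fun x _ => ?_
        rw [Set.indicator_apply]
        simp [Set.mem_preimage, hy x]
      · intro x hx
        simp only [Function.mem_support] at hx
        have hx' : (∑ᶠ y, v x y) ≠ 0 := by
          intro h0
          apply hx
          rw [Set.indicator_apply]
          split <;> simp [h0]
        rw [hy x] at hx'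
        obtain ⟨y, hyB, hvy⟩ := Finset.exists_ne_zero_of_sum_ne_zero hx'
        exact Finset.mem_coe.2 (Finset.mem_image.2 ⟨(x, y), (hmemT (x, y)).2 hvy, rfl⟩)
    rw [hRHS]
    have hLHS : ∑ p ∈ T, v p.1 p.2 * (if φ p.1 = a then (1 : ℝ) else 0)
        = ∑ x ∈ A, ∑ y ∈ B, v x y * (if φ x = a then (1 : ℝ) else 0) := by
      rw [← Finset.sum_product']
      apply Finset.sum_subset (fun p hp => Finset.mem_product.2
        ⟨Finset.mem_image.2 ⟨p, hp, rfl⟩, Finset.mem_image.2 ⟨p, hp, rfl⟩⟩)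
      intro p _ hpT
      have hz : v p.1 p.2 = 0 := by
        by_contra h; exact hpT ((hmemT p).2 h)
      simp [hz]
    rw [hLHS]
    refine Finset.sum_congr rfl fun x _ => ?_
    by_cases h : φ x = a <;> simp [h]

/-- Divergence of the pushforward flow: for a finitely supported skew-symmetric flow
`v` on `V` and a system of paths `P x y` in `V'` from `φ x` to `φ y` (given whenever
`v x y ≠ 0`, with `P y x` the reversal of `P x y`), the pushforward
`φ^♯v = ½ Σ_{(x,y)} v(x,y) J_{P(x,y)}` is skew-symmetric and its divergence at `x'`
is the sum of the divergences of `v` over the fiber `φ⁻¹(x')`. -/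
theorem pushforward_flow_divergence (V V' : Type*) [DecidableEq V'] (φ : V → V')
    (v : V → V → ℝ) (hskew : ∀ x y, v x y = -v y x)
    (hfin : {p : V × V | v p.1 p.2 ≠ 0}.Finite)
    (N : V → V → ℕ) (P : V → V → ℕ → V')
    (hP0 : ∀ x y, v x y ≠ 0 → P x y 0 = φ x)
    (hPN : ∀ x y, v x y ≠ 0 → P x y (N x y) = φ y)
    (hrev : ∀ x y, v x y ≠ 0 →
      N y x = N x y ∧ ∀ k ≤ N x y, P y x k = P x y (N x y - k)) :
    letI JP : V → V → V' → V' → ℝ := fun x y a b =>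
      ((((Finset.range (N x y)).filter fun k => P x y k = a ∧ P x y (k + 1) = b).card : ℝ) -
        (((Finset.range (N x y)).filter fun k => P x y (k + 1) = a ∧ P x y k = b).card : ℝ))
    letI K : V' → V' → ℝ := fun a b =>
      (1 / 2 : ℝ) * ∑ᶠ p : V × V, v p.1 p.2 * JP p.1 p.2 a b
    (∀ a b, K a b = -K b a) ∧
      ∀ a : V', ∑ᶠ b, K a b = ∑ᶠ x ∈ φ ⁻¹' {a}, ∑ᶠ y, v x y := by
  exact pushforward_flow_divergence_aux V V' φ v hskew hfin N P hP0 hPN
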